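/- Let (X,d) be a proper geodesic δ-hyperbolic space with a pole. If the Gromov boundary ∂X is uniformly perfect, then X is geodesically rich. -/

import Mathlib

/-!
Hyperbolicity makes Gromov products of boundary directions an ultrametric up to `3δ`, and the
visual metric comparable to `e^{-ε(·|·)}`. Uniform perfectness of `∂X` therefore gives, for every
boundary direction and every large depth `T`, a second direction branching off from it at
depth `T` up to a bounded error. Starting from a direction supplied by the pole that passes
near a given point `p` (as seen from a fixed base point), branching at four increasing depths
gives four directions whose pairwise Gromov products at `p` are bounded independently of `p`.
A target (a point, or one end of a given line) has large products at `p` with at most one of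
them, so some two directions are harmless for both targets of either richness condition. A
limit of geodesic segments between these two directions, taken by compactness in the proper
space `X`, is a bi-infinite geodesic passing boundedly close to `p` with bounded Gromov
products with the targets, which is what the two distance estimates need.
-/

open Metric Filter Set

namespace BoundaryRigidity

universe u

variable {X : Type*} {Y : Type*}

/-- The Gromov product of `x` and `y` with respect to the base point `w`. -/
noncomputable def gp [MetricSpace X] (w x y : X) : ℝ :=
  (dist x w + dist y w - dist x y) / 2

/-- A Gromov sequence: `(x_i | x_j)_w → ∞` as `i, j → ∞` (for every base point,
the condition being base-point independent). -/
def IsGromovSeq [MetricSpace X] (u : ℕ → X) : Prop :=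
  ∀ w : X, Tendsto (fun p : ℕ × ℕ => gp w (u p.1) (u p.2)) atTop atTop

/-- Two Gromov sequences are equivalent if `(x_i | y_i)_w → ∞`. -/
def GromovEquiv [MetricSpace X] (u v : ℕ → X) : Prop :=
  IsGromovSeq u ∧ IsGromovSeq v ∧
    ∀ w : X, Tendsto (fun i => gp w (u i) (v i)) atTop atTop

/-- `γ` is a geodesic (unit-speed) parametrization on the interval `[a, b]`. -/
def IsGeodSegment [MetricSpace X] (γ : ℝ → X) (a b : ℝ) : Prop :=
  ∀ s ∈ Icc a b, ∀ t ∈ Icc a b, dist (γ s) (γ t) = |s - t|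

/-- A geodesic metric space: any two points are joined by a geodesic. -/
def GeodesicSpace (X : Type*) [MetricSpace X] : Prop :=
  ∀ x y : X, ∃ γ : ℝ → X, IsGeodSegment γ 0 (dist x y) ∧ γ 0 = x ∧ γ (dist x y) = y

/-- δ-hyperbolicity (Rips condition): every point on an edge of a geodesic triangle is
within `δ` of the union of the other two edges. -/
def DeltaHyp (X : Type*) [MetricSpace X] (δ : ℝ) : Prop :=
  ∀ (γ₁ γ₂ γ₃ : ℝ → X) (a₁ b₁ a₂ b₂ a₃ b₃ : ℝ),
    IsGeodSegment γ₁ a₁ b₁ → IsGeodSegment γ₂ a₂ b₂ → IsGeodSegment γ₃ a₃ b₃ →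
    a₁ ≤ b₁ → a₂ ≤ b₂ → a₃ ≤ b₃ →
    γ₁ a₁ = γ₃ a₃ → γ₁ b₁ = γ₂ a₂ → γ₂ b₂ = γ₃ b₃ →
    ∀ s ∈ Icc a₁ b₁, ∃ p : X,
      ((∃ t ∈ Icc a₂ b₂, p = γ₂ t) ∨ (∃ t ∈ Icc a₃ b₃, p = γ₃ t)) ∧ dist (γ₁ s) p ≤ δ

/-- A point of `X̄ = X ∪ ∂X`: an interior point, or a boundary point represented
by a Gromov sequence. -/
def IsXBarPt [MetricSpace X] : X ⊕ (ℕ → X) → Prop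
  | Sum.inl _ => True
  | Sum.inr u => IsGromovSeq u

/-- The left end of the curve `γ` (restricted to `I`) is the point `p` of `X̄`:
either `γ` attains the interior point at the minimum of `I`, or `I` is unbounded
below and `γ` converges at `-∞` to the given boundary point. -/
def LeftEnd [MetricSpace X] (γ : ℝ → X) (I : Set ℝ) : X ⊕ (ℕ → X) → Prop
  | Sum.inl a => ∃ s ∈ I, γ s = a ∧ ∀ t ∈ I, s ≤ t
  | Sum.inr u => ∃ σ : ℕ → ℝ, (∀ n, σ n ∈ I) ∧ Tendsto σ atTop atBot ∧
      GromovEquiv (fun n => γ (σ n)) u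

/-- The right end of the curve `γ` (restricted to `I`) is the point `p` of `X̄`. -/
def RightEnd [MetricSpace X] (γ : ℝ → X) (I : Set ℝ) : X ⊕ (ℕ → X) → Prop
  | Sum.inl a => ∃ s ∈ I, γ s = a ∧ ∀ t ∈ I, t ≤ s
  | Sum.inr u => ∃ σ : ℕ → ℝ, (∀ n, σ n ∈ I) ∧ Tendsto σ atTop atTop ∧
      GromovEquiv (fun n => γ (σ n)) u

/-- `γ` restricted to the interval `I` is a geodesic joining `p` to `q` in `X̄`. -/
def IsGeodJoining [MetricSpace X] (γ : ℝ → X) (I : Set ℝ) (p q : X ⊕ (ℕ → X)) : Prop :=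
  I.Nonempty ∧ I.OrdConnected ∧ (∀ s ∈ I, ∀ t ∈ I, dist (γ s) (γ t) = |s - t|) ∧
    LeftEnd γ I p ∧ RightEnd γ I q

/-- `γ` restricted to the interval `I` is a `(K, C)`-quasi-geodesic joining `p` to `q`. -/
def IsQGeodJoining [MetricSpace X] (K C : ℝ) (γ : ℝ → X) (I : Set ℝ)
    (p q : X ⊕ (ℕ → X)) : Prop :=
  I.Nonempty ∧ I.OrdConnected ∧
    (∀ s ∈ I, ∀ t ∈ I, K⁻¹ * |s - t| - C ≤ dist (γ s) (γ t) ∧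
      dist (γ s) (γ t) ≤ K * |s - t| + C) ∧
    LeftEnd γ I p ∧ RightEnd γ I q

/-- `x` is a `(K, C, ρ)`-quasi-centroid of the triple `p₁, p₂, p₃ ∈ X̄`. -/
def IsQuasiCentroid [MetricSpace X] (K C ρ : ℝ) (x : X) (p₁ p₂ p₃ : X ⊕ (ℕ → X)) : Prop :=
  ∃ (γ₁ γ₂ γ₃ : ℝ → X) (I₁ I₂ I₃ : Set ℝ),
    IsQGeodJoining K C γ₁ I₁ p₁ p₂ ∧ IsQGeodJoining K C γ₂ I₂ p₂ p₃ ∧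
      IsQGeodJoining K C γ₃ I₃ p₁ p₃ ∧
      (∃ s ∈ I₁, dist x (γ₁ s) ≤ ρ) ∧ (∃ s ∈ I₂, dist x (γ₂ s) ≤ ρ) ∧
      (∃ s ∈ I₃, dist x (γ₃ s) ≤ ρ)

/-- `Δ_{(K,C,ρ)}(∂X)`: all `(K,C,ρ)`-quasi-centroids of triples of boundary points. -/
def centroidSetBdry (X : Type*) [MetricSpace X] (K C ρ : ℝ) : Set X :=
  {x | ∃ u₁ u₂ u₃ : ℕ → X, IsGromovSeq u₁ ∧ IsGromovSeq u₂ ∧ IsGromovSeq u₃ ∧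
    IsQuasiCentroid K C ρ x (Sum.inr u₁) (Sum.inr u₂) (Sum.inr u₃)}

/-- `E` is `M`-roughly full in `X`. -/
def RoughlyFull [MetricSpace X] (E : Set X) (M : ℝ) : Prop :=
  ∀ x : X, ∃ e ∈ E, dist x e ≤ M

/-- `(K, C)`-quasi-isometric embedding. -/
def IsQIEmbedding [MetricSpace X] [MetricSpace Y] (K C : ℝ) (f : X → Y) : Prop :=
  1 ≤ K ∧ 0 ≤ C ∧ ∀ x y : X,
    K⁻¹ * dist x y - C ≤ dist (f x) (f y) ∧ dist (f x) (f y) ≤ K * dist x y + C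

/-- `(K, C)`-quasi-isometry. -/
def IsQuasiIsometry [MetricSpace X] [MetricSpace Y] (K C : ℝ) (f : X → Y) : Prop :=
  IsQIEmbedding K C f ∧ ∀ y : Y, ∃ x : X, dist y (f x) ≤ C

/-- `X` is boundary rigid: every self quasi-isometry inducing the identity map on the
Gromov boundary (i.e. sending every Gromov sequence to an equivalent one) has finite
displacement. -/
def BoundaryRigid (X : Type*) [MetricSpace X] : Prop :=
  ∀ (K C : ℝ) (f : X → X), IsQuasiIsometry K C f →
    (∀ u : ℕ → X, IsGromovSeq u → GromovEquiv u (f ∘ u)) →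
    ∃ M : ℝ, ∀ x : X, dist x (f x) ≤ M

/-- `o ∈ X̄` is an `L`-pole: every point of `X` lies within `L` of some geodesic
from `o` to some boundary point. -/
def PoleAt [MetricSpace X] (L : ℝ) (o : X ⊕ (ℕ → X)) : Prop :=
  IsXBarPt o ∧ ∀ x : X, ∃ (γ : ℝ → X) (I : Set ℝ) (v : ℕ → X), IsGromovSeq v ∧
    IsGeodJoining γ I o (Sum.inr v) ∧ ∃ s ∈ I, dist x (γ s) ≤ L

/-- `X` has a pole. -/
def HasPole (X : Type*) [MetricSpace X] : Prop :=
  ∃ (L : ℝ) (o : X ⊕ (ℕ → X)), 0 ≤ L ∧ PoleAt L o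

/-- `ρ_{w,ε}` on boundary classes: `e^{-ε (ξ|ζ)_w}` where the Gromov product of two
boundary points is the infimum over representatives of the liminf of Gromov products;
equivalently the sup over representatives of the limsup of `e^{-ε (x_i|y_i)_w}`. -/
noncomputable def visRho [MetricSpace X] (w : X) (ε : ℝ) (u v : ℕ → X) : ℝ :=
  sSup {t | ∃ u' v' : ℕ → X, GromovEquiv u u' ∧ GromovEquiv v v' ∧
    t = Filter.limsup (fun i => Real.exp (-ε * gp w (u' i) (v' i))) atTop}

/-- The visual metric `d_{w,ε}` on boundary classes, as a chain infimum of `ρ_{w,ε}`. -/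
noncomputable def visDist [MetricSpace X] (w : X) (ε : ℝ) (u v : ℕ → X) : ℝ :=
  sInf {s | ∃ (n : ℕ) (c : ℕ → ℕ → X), 1 ≤ n ∧ (∀ i, i ≤ n → IsGromovSeq (c i)) ∧
    GromovEquiv (c 0) u ∧ GromovEquiv (c n) v ∧
    s = ∑ i ∈ Finset.range n, visRho w ε (c i) (c (i + 1))}

/-- The Gromov boundary of `X` (with any visual metric whose parameters are admissible
for `δ`) is uniformly perfect. -/
def BoundaryUniformlyPerfect (X : Type*) [MetricSpace X] (δ : ℝ) : Prop :=
  ∀ (w : X) (ε : ℝ), 0 < ε → ε < 1 → ε * (5 * δ) < 1 →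
    ∃ S : ℝ, 1 ≤ S ∧ ∃ r₀ : ℝ, 0 < r₀ ∧
      ∀ u : ℕ → X, IsGromovSeq u → ∀ r : ℝ, 0 < r → r ≤ r₀ →
        ∃ v : ℕ → X, IsGromovSeq v ∧ r / S < visDist w ε u v ∧ visDist w ε u v ≤ r

/-- Bi-infinite geodesic. -/
def IsBiInfGeod [MetricSpace X] (γ : ℝ → X) : Prop :=
  ∀ s t : ℝ, dist (γ s) (γ t) = |s - t|

/-- Distance between (the images of) two bi-infinite geodesics. -/
noncomputable def lineDist [MetricSpace X] (γ γ' : ℝ → X) : ℝ :=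
  sInf {r | ∃ s t : ℝ, r = dist (γ s) (γ' t)}

/-- First condition in the definition of geodesic richness. -/
def RichCondOne (X : Type*) [MetricSpace X] (r₀ r₁ r₂ : ℝ) : Prop :=
  ∀ p q : X, r₀ ≤ dist p q → ∃ γ : ℝ → X, IsBiInfGeod γ ∧
    infDist p (range γ) < r₁ ∧ |infDist q (range γ) - dist p q| < r₂

/-- Second condition in the definition of geodesic richness. -/
def RichCondTwo (X : Type*) [MetricSpace X] (r₃ r₄ : ℝ) : Prop :=
  ∀ γ : ℝ → X, IsBiInfGeod γ → ∀ p : X, ∃ γ' : ℝ → X, IsBiInfGeod γ' ∧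
    infDist p (range γ') < r₃ ∧ |infDist p (range γ) - lineDist γ' γ| < r₄

/-- Geodesically rich space. -/
def GeodesicallyRich (X : Type*) [MetricSpace X] : Prop :=
  ∃ r₀ r₁ r₂ r₃ r₄ : ℝ, RichCondOne X r₀ r₁ r₂ ∧ RichCondTwo X r₃ r₄

/-- Every closest-point projection of `x` to the geodesic segment `γ|_{[a,b]}`
lies within `R` of the point `c`. -/
def segProjIn [MetricSpace X] (γ : ℝ → X) (a b : ℝ) (x c : X) (R : ℝ) : Prop :=
  ∀ s ∈ Icc a b, (∀ t ∈ Icc a b, dist x (γ s) ≤ dist x (γ t)) → dist (γ s) c ≤ R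

/-- Projection to a geodesic `[y,z]` (parametrized by `γ` on `I`): the set of closest
points for interior `x`, and the set of `(1,0,3δ)`-quasi-centroids of `{x,y,z}` for
boundary `x`. -/
def projSet [MetricSpace X] (δ : ℝ) (γ : ℝ → X) (I : Set ℝ) (y z : X ⊕ (ℕ → X)) :
    X ⊕ (ℕ → X) → Set X
  | Sum.inl a => {p | ∃ s ∈ I, p = γ s ∧ ∀ t ∈ I, dist a (γ s) ≤ dist a (γ t)}
  | Sum.inr u => {p | IsQuasiCentroid 1 0 (3 * δ) p (Sum.inr u) y z}


section GromovProduct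
variable [MetricSpace X]

lemma gp_comm (w x y : X) : gp w x y = gp w y x := by
  simp only [gp, dist_comm x y]; ring

lemma gp_self (w x : X) : gp w x x = dist x w := by
  simp [gp]

lemma gp_nonneg (w x y : X) : 0 ≤ gp w x y := by
  have := dist_triangle x w y
  simp only [gp]
  rw [dist_comm y w] at *
  linarith

lemma gp_le_dist_left (w x y : X) : gp w x y ≤ dist x w := by
  have := dist_triangle y x w
  simp only [gp]
  rw [dist_comm y x] at this
  linarith

lemma gp_le_dist_right (w x y : X) : gp w x y ≤ dist y w :=
  gp_comm w x y ▸ gp_le_dist_left w y x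

lemma gp_le_gp_add_dist (w x x' y : X) : gp w x y ≤ gp w x' y + dist x x' := by
  have := dist_triangle x x' w
  have := dist_triangle x' x y
  simp only [gp]
  rw [dist_comm x' x] at *
  linarith

lemma gp_le_gp_add_dist_base (w w' x y : X) : gp w x y ≤ gp w' x y + dist w w' := by
  have := dist_triangle x w' w
  have := dist_triangle y w' w
  simp only [gp]
  rw [dist_comm w w']
  linarith

lemma gp_add_gp_swap (w p x : X) : gp w p x + gp p w x = dist w p := by
  simp only [gp, dist_comm w p, dist_comm x p, dist_comm w x]; ring

lemma dist_eq_dist_add_dist_sub_gp (p q z : X) :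
    dist q z = dist q p + dist p z - 2 * gp p q z := by
  simp only [gp, dist_comm z p]; ring

lemma gp_eq_of_base_change (w p x y : X) :
    gp p x y = gp w x y - gp w p x - gp w p y + dist w p := by
  simp only [gp, dist_comm x p, dist_comm y p, dist_comm p w]; ring

lemma continuous_gp (w x : X) : Continuous (gp w x) := by
  unfold gp; fun_prop

lemma gp_eq_dist_of_dist_eq_add {x y z : X} (h : dist x z = dist x y + dist y z) :
    gp x y z = dist x y := by
  simp only [gp, dist_comm z x, dist_comm y x, h]; ring

lemma gp_le_dist_of_dist_eq_add {x y z : X} (h : dist x z = dist x y + dist y z) (p : X) :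
    gp p x z ≤ dist p y := by
  have h0 : gp y x z = 0 := by simp only [gp, dist_comm x y, dist_comm z y, h]; ring
  have := gp_le_gp_add_dist_base p y x z
  linarith

lemma gp_add_gp_of_dist_eq_add {x y z : X} (h : dist x z = dist x y + dist y z) (p : X) :
    gp p x y + gp p y z = dist p y + gp p x z := by
  simp only [gp, h, dist_comm y p]; ring

end GromovProduct

def FourPointCondition (X : Type*) [MetricSpace X] (κ : ℝ) : Prop :=
  ∀ w x y z : X, min (gp w x y) (gp w y z) - κ ≤ gp w x z

lemma FourPointCondition.nonneg [MetricSpace X] {κ : ℝ} (hX : FourPointCondition X κ) (x : X) :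
    0 ≤ κ := by
  simpa [gp_self] using hX x x x x

section Geodesics
variable [MetricSpace X] {δ : ℝ}

lemma dist_eq_add_of_isometric {γ : ℝ → X} {I : Set ℝ}
    (hγ : ∀ s ∈ I, ∀ t ∈ I, dist (γ s) (γ t) = |s - t|) {r s t : ℝ} (hr : r ∈ I) (hs : s ∈ I)
    (ht : t ∈ I) (hrs : r ≤ s) (hst : s ≤ t) :
    dist (γ r) (γ t) = dist (γ r) (γ s) + dist (γ s) (γ t) := by
  rw [hγ r hr t ht, hγ r hr s hs, hγ s hs t ht, abs_of_nonpos (by linarith),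
    abs_of_nonpos (by linarith), abs_of_nonpos (by linarith)]
  ring

lemma IsGeodSegment.dist_eq {σ : ℝ → X} {x z : X} (hσ : IsGeodSegment σ 0 (dist x z))
    (h0 : σ 0 = x) (h1 : σ (dist x z) = z) {t : ℝ} (ht : t ∈ Icc 0 (dist x z)) :
    dist x (σ t) = t ∧ dist z (σ t) = dist x z - t := by
  constructor
  · rw [← h0, hσ 0 ⟨le_rfl, dist_nonneg⟩ t ht, abs_of_nonpos (by linarith [ht.1])]; ring
  · have h := hσ _ ⟨dist_nonneg, le_rfl⟩ t ht
    rw [h1] at h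
    rw [h, abs_of_nonneg (by linarith [ht.2])]

lemma IsGeodSegment.gp_le_dist {σ : ℝ → X} {x z : X} (hσ : IsGeodSegment σ 0 (dist x z))
    (h0 : σ 0 = x) (h1 : σ (dist x z) = z) {t : ℝ} (ht : t ∈ Icc 0 (dist x z)) (w : X) :
    gp w x z ≤ dist w (σ t) := by
  obtain ⟨hx, hz⟩ := hσ.dist_eq h0 h1 ht
  have := dist_triangle x (σ t) w
  have := dist_triangle z (σ t) w
  simp only [gp]
  linarith [dist_comm (σ t) w]

/-- The witness is the point at distance `(z|w)_x` from `x`, the centre of the inscribed tripod. -/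
lemma DeltaHyp.exists_dist_le_gp_add (hgeo : GeodesicSpace X) (hhyp : DeltaHyp X δ)
    {σ : ℝ → X} {x z : X} (hσ : IsGeodSegment σ 0 (dist x z))
    (h0 : σ 0 = x) (h1 : σ (dist x z) = z) (w : X) :
    ∃ t ∈ Icc 0 (dist x z), dist w (σ t) ≤ gp w x z + 2 * δ := by
  obtain ⟨γ₂, hγ₂, hγ₂0, hγ₂1⟩ := hgeo z w
  obtain ⟨γ₃, hγ₃, hγ₃0, hγ₃1⟩ := hgeo x w
  set t₀ := gp x z w
  have ht₀ : t₀ ∈ Icc 0 (dist x z) :=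
    ⟨gp_nonneg _ _ _, by rw [dist_comm x z]; exact gp_le_dist_left x z w⟩
  obtain ⟨p, hp, hdp⟩ := hhyp σ γ₂ γ₃ 0 (dist x z) 0 (dist z w) 0 (dist x w) hσ hγ₂ hγ₃
    dist_nonneg dist_nonneg dist_nonneg (by rw [h0, hγ₃0]) (by rw [h1, hγ₂0])
    (by rw [hγ₂1, hγ₃1]) t₀ ht₀
  refine ⟨t₀, ht₀, ?_⟩
  obtain ⟨hxm, hzm⟩ := hσ.dist_eq h0 h1 ht₀
  have ht₀' : t₀ = (dist z x + dist w x - dist z w) / 2 := rfl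
  have := dist_triangle w p (σ t₀)
  rcases hp with ⟨t, ht, rfl⟩ | ⟨t, ht, rfl⟩
  · obtain ⟨hzp, hwp⟩ := hγ₂.dist_eq hγ₂0 hγ₂1 ht
    have := dist_triangle z (γ₂ t) (σ t₀)
    simp only [gp]
    linarith [dist_comm (σ t₀) (γ₂ t), dist_comm z x, dist_comm w x, dist_comm z w]
  · obtain ⟨hxp, hwp⟩ := hγ₃.dist_eq hγ₃0 hγ₃1 ht
    have := dist_triangle x (γ₃ t) (σ t₀)
    simp only [gp]
    linarith [dist_comm (σ t₀) (γ₃ t), dist_comm z x, dist_comm w x, dist_comm z w]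

lemma DeltaHyp.fourPointCondition (hgeo : GeodesicSpace X) (hhyp : DeltaHyp X δ) :
    FourPointCondition X (3 * δ) := by
  intro w x y z
  obtain ⟨σ, hσ, h0, h1⟩ := hgeo x z
  obtain ⟨t₀, ht₀, hnear⟩ := hhyp.exists_dist_le_gp_add hgeo hσ h0 h1 w
  obtain ⟨γ₂, hγ₂, hγ₂0, hγ₂1⟩ := hgeo z y
  obtain ⟨γ₃, hγ₃, hγ₃0, hγ₃1⟩ := hgeo x y
  obtain ⟨p, hp, hdp⟩ := hhyp σ γ₂ γ₃ 0 (dist x z) 0 (dist z y) 0 (dist x y) hσ hγ₂ hγ₃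
    dist_nonneg dist_nonneg dist_nonneg (by rw [h0, hγ₃0]) (by rw [h1, hγ₂0])
    (by rw [hγ₂1, hγ₃1]) t₀ ht₀
  have hwp : min (gp w x y) (gp w y z) ≤ dist w p := by
    rcases hp with ⟨t, ht, rfl⟩ | ⟨t, ht, rfl⟩
    · exact (min_le_right _ _).trans (gp_comm w y z ▸ hγ₂.gp_le_dist hγ₂0 hγ₂1 ht w)
    · exact (min_le_left _ _).trans (hγ₃.gp_le_dist hγ₃0 hγ₃1 ht w)
  linarith [dist_triangle w (σ t₀) p]

end Geodesics

section Sequences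
variable [MetricSpace X] {κ : ℝ} {w : X} {a b c u v : ℕ → X}

def GpEventuallyLE (w : X) (a b : ℕ → X) (B : ℝ) : Prop :=
  ∃ N, ∀ j k, N ≤ j → N ≤ k → gp w (a j) (b k) ≤ B

def GpEventuallyGE (w : X) (a b : ℕ → X) (B : ℝ) : Prop :=
  ∃ N, ∀ j k, N ≤ j → N ≤ k → B ≤ gp w (a j) (b k)

lemma GpEventuallyLE.symm {B : ℝ} (h : GpEventuallyLE w a b B) : GpEventuallyLE w b a B :=
  let ⟨N, hN⟩ := h
  ⟨N, fun j k hj hk => gp_comm w (b j) (a k) ▸ hN k j hk hj⟩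

lemma GpEventuallyGE.symm {B : ℝ} (h : GpEventuallyGE w a b B) : GpEventuallyGE w b a B :=
  let ⟨N, hN⟩ := h
  ⟨N, fun j k hj hk => gp_comm w (b j) (a k) ▸ hN k j hk hj⟩

lemma GpEventuallyLE.mono {B B' : ℝ} (h : GpEventuallyLE w a b B) (hB : B ≤ B') :
    GpEventuallyLE w a b B' :=
  let ⟨N, hN⟩ := h
  ⟨N, fun j k hj hk => (hN j k hj hk).trans hB⟩

lemma GpEventuallyGE.mono {B B' : ℝ} (h : GpEventuallyGE w a b B) (hB : B' ≤ B) :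
    GpEventuallyGE w a b B' :=
  let ⟨N, hN⟩ := h
  ⟨N, fun j k hj hk => hB.trans (hN j k hj hk)⟩

lemma IsGromovSeq.gpEventuallyGE (hu : IsGromovSeq u) (w : X) (M : ℝ) :
    GpEventuallyGE w u u M :=
  eventually_atTop_prod_self.1 ((hu w).eventually_ge_atTop M)

lemma IsGromovSeq.tendsto_dist (hu : IsGromovSeq u) (p : X) :
    Tendsto (fun n => dist p (u n)) atTop atTop := by
  refine ((hu p).comp tendsto_atTop_diagonal).congr fun n => ?_
  simp [gp_self, dist_comm]

lemma GromovEquiv.refl (hu : IsGromovSeq u) : GromovEquiv u u :=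
  ⟨hu, hu, fun w => ((hu w).comp tendsto_atTop_diagonal)⟩

lemma GpEventuallyLE.of_base_change {p : X} {x y : ℕ → X} {G Cx Cy : ℝ}
    (hB : GpEventuallyLE w x y G) (hx : ∀ᶠ n in atTop, dist w p - Cx ≤ gp w p (x n))
    (hy : ∀ᶠ n in atTop, dist w p - Cy ≤ gp w p (y n)) :
    GpEventuallyLE p x y (G - dist w p + Cx + Cy) := by
  obtain ⟨N₀, h₀⟩ := hB
  obtain ⟨N₁, h₁⟩ := eventually_atTop.1 (hx.and hy)
  refine ⟨max N₀ N₁, fun j k hj hk => ?_⟩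
  have := h₀ j k (le_of_max_le_left hj) (le_of_max_le_left hk)
  have := (h₁ j (le_of_max_le_right hj)).1
  have := (h₁ k (le_of_max_le_right hk)).2
  have := gp_eq_of_base_change w p (x j) (y k)
  linarith

variable (hX : FourPointCondition X κ)
include hX

lemma GpEventuallyGE.trans {α β : ℝ} (hab : GpEventuallyGE w a b α)
    (hbc : GpEventuallyGE w b c β) : GpEventuallyGE w a c (min α β - κ) := by
  obtain ⟨N₁, h₁⟩ := hab
  obtain ⟨N₂, h₂⟩ := hbc
  refine ⟨max N₁ N₂, fun j k hj hk => ?_⟩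
  have := h₁ j (max N₁ N₂) (le_of_max_le_left hj) (le_max_left _ _)
  have := h₂ (max N₁ N₂) k (le_max_right _ _) (le_of_max_le_right hk)
  have := hX w (a j) (b (max N₁ N₂)) (c k)
  have := min_le_min ‹α ≤ _› ‹β ≤ _›
  linarith

lemma GpEventuallyLE.trans_ge {G E : ℝ} (hab : GpEventuallyLE w a b G)
    (hcb : GpEventuallyGE w c b E) (hE : G + κ < E) : GpEventuallyLE w a c (G + κ) := by
  obtain ⟨N₁, h₁⟩ := hab
  obtain ⟨N₂, h₂⟩ := hcb
  refine ⟨max N₁ N₂, fun j k hj hk => ?_⟩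
  have := h₁ j (max N₁ N₂) (le_of_max_le_left hj) (le_max_left _ _)
  have := h₂ k (max N₁ N₂) (le_of_max_le_right hk) (le_max_right _ _)
  have := hX w (a j) (c k) (b (max N₁ N₂))
  by_contra! hcon
  have := lt_min hcon (show G + κ < gp w (c k) (b (max N₁ N₂)) by linarith)
  linarith

lemma GromovEquiv.gpEventuallyGE (h : GromovEquiv u v) (w : X) (M : ℝ) :
    GpEventuallyGE w u v M := by
  obtain ⟨N₁, h₁⟩ := h.1.gpEventuallyGE w (M + κ)
  obtain ⟨N₂, h₂⟩ := eventually_atTop.1 ((h.2.2 w).eventually_ge_atTop (M + κ))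
  refine ⟨max N₁ N₂, fun j k hj hk => ?_⟩
  have := hX w (u j) (u k) (v k)
  have := min_le_min (h₁ j k (le_of_max_le_left hj) (le_of_max_le_left hk))
    (h₂ k (le_of_max_le_right hk))
  rw [min_self] at this
  linarith

lemma gpEventuallyLE_of_frequently (hu : IsGromovSeq u) (hv : IsGromovSeq v) {c : ℝ}
    (hfreq : ∃ᶠ i in atTop, gp w (u i) (v i) ≤ c) : GpEventuallyLE w u v (c + 2 * κ) := by
  obtain ⟨N₁, h₁⟩ := hu.gpEventuallyGE w (c + 3 * κ + 1)
  obtain ⟨N₂, h₂⟩ := hv.gpEventuallyGE w (c + 3 * κ + 1)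
  obtain ⟨i, hi, hsmall⟩ := frequently_atTop.1 hfreq (max N₁ N₂)
  have := hX.nonneg w
  refine ⟨max N₁ N₂, fun j k hj hk => ?_⟩
  by_contra! hcon
  have hu' := h₁ i j (le_of_max_le_left hi) (le_of_max_le_left hj)
  have hv' := h₂ k i (le_of_max_le_right hk) (le_of_max_le_right hi)
  have h₃ : c + κ < gp w (u j) (v i) := by
    have := hX w (u j) (v k) (v i)
    have := lt_min hcon (show c + 2 * κ < gp w (v k) (v i) by linarith)
    linarith
  have := hX w (u i) (u j) (v i)
  have := lt_min (show c + κ < gp w (u i) (u j) by linarith) h₃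
  linarith

lemma gpEventuallyGE_of_eventually (hu : IsGromovSeq u) (hv : IsGromovSeq v) {c : ℝ}
    (hdiag : ∀ᶠ i in atTop, c ≤ gp w (u i) (v i)) : GpEventuallyGE w u v (c - 2 * κ) := by
  obtain ⟨N₀, h₀⟩ := eventually_atTop.1 hdiag
  obtain ⟨N₁, h₁⟩ := hu.gpEventuallyGE w c
  obtain ⟨N₂, h₂⟩ := hv.gpEventuallyGE w c
  have := hX.nonneg w
  set i := max N₀ (max N₁ N₂)
  refine ⟨i, fun j k hj hk => ?_⟩
  have hi₀ : N₀ ≤ i := le_max_left _ _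
  have hi₁ : N₁ ≤ i := (le_max_left _ _).trans (le_max_right _ _)
  have hi₂ : N₂ ≤ i := (le_max_right _ _).trans (le_max_right _ _)
  have hiv : c - κ ≤ gp w (u i) (v k) := by
    have := hX w (u i) (v i) (v k)
    have := min_le_min (h₀ i hi₀) (h₂ i k hi₂ (hi₂.trans hk))
    rw [min_self] at this
    linarith
  have := hX w (u j) (u i) (v k)
  have := min_le_min (h₁ j i (hi₁.trans hj) hi₁) hiv
  rw [min_eq_right (by linarith)] at this
  linarith

lemma GpEventuallyGE.eventually_gp_ge {p : X} {c₁ c₂ : ℝ}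
    (h₁ : ∀ᶠ n in atTop, c₁ ≤ gp w p (a n)) (h₂ : GpEventuallyGE w a b c₂) :
    ∀ᶠ n in atTop, min c₁ c₂ - κ ≤ gp w p (b n) := by
  obtain ⟨N₁, hN₁⟩ := eventually_atTop.1 h₁
  obtain ⟨N₂, hN₂⟩ := h₂
  refine eventually_atTop.2 ⟨max N₁ N₂, fun n hn => ?_⟩
  have := hX w p (a (max N₁ N₂)) (b n)
  have := min_le_min (hN₁ (max N₁ N₂) (le_max_left _ _))
    (hN₂ (max N₁ N₂) n (le_max_right _ _) (le_of_max_le_right hn))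
  linarith

lemma GromovEquiv.eventually_gp_ge {p : X} {c : ℝ} (h : ∀ᶠ n in atTop, c ≤ gp w p (a n))
    (hab : GromovEquiv a b) : ∀ᶠ n in atTop, c - κ ≤ gp w p (b n) := by
  filter_upwards [(hab.gpEventuallyGE hX w c).eventually_gp_ge hX h] with n hn
  rwa [min_self] at hn

end Sequences

/-- The chain inequality behind Frink's metrization lemma. -/
theorem le_two_mul_sum_Ico_of_le_mul_max {φ : ℕ → ℕ → ℝ} {L : ℝ} (hL : 1 ≤ L)
    (hL2 : L ^ 2 ≤ 2) (hself : ∀ i, φ i i ≤ 0) (hstep : ∀ i, 0 ≤ φ i (i + 1))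
    (hφ : ∀ i j k, i ≤ j → j ≤ k → φ i k ≤ L * max (φ i j) (φ j k)) {i j : ℕ} (hij : i ≤ j) :
    φ i j ≤ 2 * ∑ l ∈ Finset.Ico i j, φ l (l + 1) := by
  classical
  induction hd : j - i using Nat.strong_induction_on generalizing i j with
  | _ d ih =>
  set S : ℕ → ℕ → ℝ := fun a b => ∑ l ∈ Finset.Ico a b, φ l (l + 1) with hS
  change φ i j ≤ 2 * S i j
  rcases hij.eq_or_lt with rfl | hlt
  · simpa [hS] using hself i
  have hT : 0 ≤ S i j := Finset.sum_nonneg fun l _ => hstep l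
  -- split the chain at the first edge `(m, m + 1)` that carries it past half its length
  have hlast : S i j ≤ 2 * S i (i + (j - i - 1) + 1) := by
    rw [show i + (j - i - 1) + 1 = j by omega]; linarith
  have hex : ∃ k, S i j ≤ 2 * S i (i + k + 1) := ⟨_, hlast⟩
  set k := Nat.find hex
  have hkd : k < d := by have := Nat.find_min' hex hlast; omega
  set m := i + k
  have hleft : 2 * S i m ≤ S i j := by
    rcases Nat.eq_zero_or_pos k with hk0 | hkpos
    · simp only [m, hk0, add_zero, hS, Finset.Ico_self, Finset.sum_empty, mul_zero]
      exact hT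
    · have := Nat.find_min hex (show k - 1 < k by omega)
      rw [show i + (k - 1) + 1 = m by omega] at this
      linarith
  have hright : 2 * S (m + 1) j ≤ S i j := by
    have := Finset.sum_Ico_consecutive (fun l => φ l (l + 1)) (show i ≤ m + 1 by omega)
      (show m + 1 ≤ j by omega)
    linarith [Nat.find_spec hex]
  have hmid : φ m (m + 1) ≤ S i j :=
    Finset.single_le_sum (f := fun l => φ l (l + 1)) (fun l _ => hstep l)
      (Finset.mem_Ico.2 ⟨by omega, by omega⟩)
  have h₁ : φ i m ≤ S i j := (ih k hkd (by omega) (by omega)).trans hleft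
  have h₂ : φ (m + 1) j ≤ S i j := (ih (j - (m + 1)) (by omega) (by omega) rfl).trans hright
  have h₃ : φ i (m + 1) ≤ L * S i j :=
    (hφ i m (m + 1) (by omega) (by omega)).trans
      (mul_le_mul_of_nonneg_left (max_le h₁ hmid) (by linarith))
  calc φ i j ≤ L * max (φ i (m + 1)) (φ (m + 1) j) := hφ _ _ _ (by omega) (by omega)
    _ ≤ L * (L * S i j) := by
      refine mul_le_mul_of_nonneg_left (max_le h₃ (h₂.trans ?_)) (by linarith)
      nlinarith
    _ ≤ 2 * S i j := by nlinarith

theorem le_two_mul_sum_of_le_mul_max {α : Type*} {ρ : α → α → ℝ} {L : ℝ} (hL : 1 ≤ L)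
    (hL2 : L ^ 2 ≤ 2) (hρ0 : ∀ x y, 0 ≤ ρ x y) (hρ : ∀ x y z, ρ x z ≤ L * max (ρ x y) (ρ y z))
    (x : ℕ → α) {n : ℕ} (hn : n ≠ 0) :
    ρ (x 0) (x n) ≤ 2 * ∑ l ∈ Finset.range n, ρ (x l) (x (l + 1)) := by
  classical
  -- discard the diagonal values, on which `ρ` need not vanish
  have key := le_two_mul_sum_Ico_of_le_mul_max
    (φ := fun i j => if i = j then 0 else ρ (x i) (x j)) hL hL2 (fun i => by simp)
    (fun i => by simp [hρ0]) (fun i j k _ _ => ?_) (Nat.zero_le n)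
  · rw [Finset.range_eq_Ico]
    simpa [Ne.symm hn] using key
  have hL0 : 0 ≤ L := by linarith
  by_cases hik : i = k
  · simp only [hik, if_true]
    exact mul_nonneg hL0 (le_max_of_le_left (by split_ifs <;> simp [hρ0]))
  by_cases hij : i = j
  · subst hij
    simp only [hik, if_false, if_true]
    nlinarith [le_max_right 0 (ρ (x i) (x k)), hρ0 (x i) (x k)]
  by_cases hjk : j = k
  · subst hjk
    simp only [hik, if_false, if_true]
    nlinarith [le_max_left (ρ (x i) (x j)) 0, hρ0 (x i) (x j)]
  simpa [hik, hij, hjk] using hρ (x i) (x j) (x k)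

section VisualMetric
variable [MetricSpace X] {κ ε : ℝ} {w : X} {u v : ℕ → X}

lemma exp_neg_mul_le_exp_neg_mul_iff (hε : 0 < ε) {a b : ℝ} :
    Real.exp (-ε * a) ≤ Real.exp (-ε * b) ↔ b ≤ a := by
  rw [Real.exp_le_exp, neg_mul, neg_mul, neg_le_neg_iff, mul_le_mul_iff_right₀ hε]

lemma exp_neg_mul_lt_exp_neg_mul_iff (hε : 0 < ε) {a b : ℝ} :
    Real.exp (-ε * a) < Real.exp (-ε * b) ↔ b < a := by
  rw [Real.exp_lt_exp, neg_mul, neg_mul, neg_lt_neg_iff, mul_lt_mul_iff_right₀ hε]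

lemma exp_neg_mul_sub_log_div (hε : ε ≠ 0) {c : ℝ} (hc : 0 < c) (T : ℝ) :
    Real.exp (-ε * (T - Real.log c / ε)) = c * Real.exp (-ε * T) := by
  rw [show -ε * (T - Real.log c / ε) = Real.log c + -ε * T by field_simp; ring,
    Real.exp_add, Real.exp_log hc]

lemma exp_neg_mul_gp_le_one (hε : 0 ≤ ε) (x y : X) : Real.exp (-ε * gp w x y) ≤ 1 :=
  Real.exp_le_one_iff.2 (by nlinarith [gp_nonneg w x y])

lemma isBoundedUnder_exp_neg_mul_gp (hε : 0 ≤ ε) (a b : ℕ → X) :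
    IsBoundedUnder (· ≤ ·) atTop fun i => Real.exp (-ε * gp w (a i) (b i)) :=
  isBoundedUnder_of ⟨1, fun _ => exp_neg_mul_gp_le_one hε _ _⟩

lemma isCoboundedUnder_exp_neg_mul_gp (a b : ℕ → X) :
    IsCoboundedUnder (· ≤ ·) atTop fun i => Real.exp (-ε * gp w (a i) (b i)) :=
  (isBoundedUnder_of ⟨0, fun _ => (Real.exp_pos _).le⟩).isCoboundedUnder_le

lemma limsup_le_visRho (hε : 0 ≤ ε) (hu : IsGromovSeq u) (hv : IsGromovSeq v) :
    limsup (fun i => Real.exp (-ε * gp w (u i) (v i))) atTop ≤ visRho w ε u v := by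
  refine le_csSup ⟨1, ?_⟩ ⟨u, v, .refl hu, .refl hv, rfl⟩
  rintro t ⟨u', v', -, -, rfl⟩
  exact limsup_le_of_le (isCoboundedUnder_exp_neg_mul_gp u' v')
    (.of_forall fun i => exp_neg_mul_gp_le_one hε _ _)

lemma visRho_nonneg (hε : 0 ≤ ε) (u v : ℕ → X) : 0 ≤ visRho w ε u v := by
  refine Real.sSup_nonneg ?_
  rintro t ⟨u', v', -, -, rfl⟩
  exact le_limsup_of_frequently_le (.of_forall fun i => (Real.exp_pos _).le)
    (isBoundedUnder_exp_neg_mul_gp hε u' v')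

lemma visRho_mem_visDist_chains (hu : IsGromovSeq u) (hv : IsGromovSeq v) :
    visRho w ε u v ∈ {s | ∃ (n : ℕ) (c : ℕ → ℕ → X), 1 ≤ n ∧
      (∀ i, i ≤ n → IsGromovSeq (c i)) ∧ GromovEquiv (c 0) u ∧ GromovEquiv (c n) v ∧
      s = ∑ i ∈ Finset.range n, visRho w ε (c i) (c (i + 1))} := by
  refine ⟨1, fun i => if i = 0 then u else v, le_rfl, fun i _ => ?_, ?_, ?_, by simp⟩
  · dsimp only
    split_ifs <;> assumption
  · simpa using GromovEquiv.refl hu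
  · simpa using GromovEquiv.refl hv

lemma visDist_le_visRho (hε : 0 ≤ ε) (hu : IsGromovSeq u) (hv : IsGromovSeq v) :
    visDist w ε u v ≤ visRho w ε u v := by
  refine csInf_le ⟨0, ?_⟩ (visRho_mem_visDist_chains hu hv)
  rintro s ⟨n, c, -, -, -, -, rfl⟩
  exact Finset.sum_nonneg fun i _ => visRho_nonneg hε _ _

variable (hX : FourPointCondition X κ)
include hX

lemma FourPointCondition.exp_neg_mul_gp_le (hε : 0 ≤ ε) (x y z : X) :
    Real.exp (-ε * gp w x z) ≤
      Real.exp (ε * κ) * max (Real.exp (-ε * gp w x y)) (Real.exp (-ε * gp w y z)) := by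
  have hanti : Antitone fun t => Real.exp (-ε * t) := fun a b hab =>
    Real.exp_le_exp.2 (by nlinarith)
  rw [← hanti.map_min, ← Real.exp_add, Real.exp_le_exp]
  nlinarith [hX w x y z]

lemma FourPointCondition.gpEventuallyLE_of_exp_le_visRho (hε : 0 < ε) (hu : IsGromovSeq u)
    (hv : IsGromovSeq v) {T : ℝ} (h : Real.exp (-ε * T) ≤ visRho w ε u v) :
    GpEventuallyLE w u v (T + Real.log 2 / ε + 4 * κ) := by
  set T' := T + Real.log 2 / ε
  have hT' : Real.exp (-ε * T') < visRho w ε u v := by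
    have := exp_neg_mul_sub_log_div hε.ne' two_pos T'
    rw [show T' - Real.log 2 / ε = T by ring] at this
    linarith [Real.exp_pos (-ε * T')]
  obtain ⟨_, ⟨u', v', huu', hvv', rfl⟩, hlt⟩ :=
    exists_lt_of_lt_csSup (by exact ⟨_, u, v, .refl hu, .refl hv, rfl⟩) hT'
  have hfreq : ∃ᶠ i in atTop, gp w (u' i) (v' i) ≤ T' :=
    (frequently_lt_of_lt_limsup (isCoboundedUnder_exp_neg_mul_gp u' v') hlt).mono
      fun i hi => ((exp_neg_mul_lt_exp_neg_mul_iff hε).1 hi).le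
  have h₁ := gpEventuallyLE_of_frequently hX huu'.2.1 hvv'.2.1 hfreq
  have h₂ := h₁.trans_ge hX (hvv'.gpEventuallyGE hX w _) (lt_add_one _)
  have h₃ := h₂.symm.trans_ge hX (huu'.gpEventuallyGE hX w _) (lt_add_one _)
  exact h₃.symm.mono (by linarith)

/-- At every large index, a chain of boundary points is a chain of points, to which the chain
inequality applies. -/
lemma FourPointCondition.eventually_exp_neg_mul_gp_le (hε : 0 < ε)
    (hL : Real.exp (ε * κ) ^ 2 ≤ 2) {n : ℕ} (hn : n ≠ 0) {c : ℕ → ℕ → X}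
    (hc : ∀ i, i ≤ n → IsGromovSeq (c i)) {η : ℝ} (hη : 0 < η) :
    ∀ᶠ m in atTop, Real.exp (-ε * gp w (c 0 m) (c n m)) ≤
      2 * (∑ i ∈ Finset.range n, visRho w ε (c i) (c (i + 1)) + η) := by
  have hn' : (0 : ℝ) < n := by exact_mod_cast Nat.pos_of_ne_zero hn
  have hterm : ∀ i ∈ Finset.range n, ∀ᶠ m in atTop,
      Real.exp (-ε * gp w (c i m) (c (i + 1) m)) < visRho w ε (c i) (c (i + 1)) + η / n := by
    intro i hi
    have hi' := Finset.mem_range.1 hi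
    refine eventually_lt_of_limsup_lt ?_ (isBoundedUnder_exp_neg_mul_gp hε.le _ _)
    have := limsup_le_visRho (w := w) hε.le (hc i (by omega)) (hc (i + 1) (by omega))
    have : 0 < η / n := by positivity
    linarith
  filter_upwards [(Filter.eventually_all_finset _).2 hterm] with m hm
  calc Real.exp (-ε * gp w (c 0 m) (c n m))
      ≤ 2 * ∑ i ∈ Finset.range n, Real.exp (-ε * gp w (c i m) (c (i + 1) m)) :=
        le_two_mul_sum_of_le_mul_max (Real.one_le_exp (by nlinarith [hX.nonneg w])) hL
          (fun _ _ => (Real.exp_pos _).le) (hX.exp_neg_mul_gp_le hε.le) (fun i => c i m) hn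
    _ ≤ 2 * ∑ i ∈ Finset.range n, (visRho w ε (c i) (c (i + 1)) + η / n) := by
        gcongr with i hi; exact (hm i hi).le
    _ = 2 * (∑ i ∈ Finset.range n, visRho w ε (c i) (c (i + 1)) + η) := by
        rw [Finset.sum_add_distrib, Finset.sum_const, Finset.card_range, nsmul_eq_mul,
          mul_div_cancel₀ _ hn'.ne']

lemma FourPointCondition.gpEventuallyGE_of_visDist_le (hε : 0 < ε)
    (hL : Real.exp (ε * κ) ^ 2 ≤ 2) (hu : IsGromovSeq u) (hv : IsGromovSeq v) {T : ℝ}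
    (h : visDist w ε u v ≤ Real.exp (-ε * T)) :
    GpEventuallyGE w u v (T - Real.log 6 / ε - 4 * κ) := by
  set r := Real.exp (-ε * T)
  have hr : 0 < r := Real.exp_pos _
  obtain ⟨_, ⟨n, c, hn, hc, hc0, hcn, rfl⟩, hs⟩ :=
    exists_lt_of_csInf_lt ⟨_, visRho_mem_visDist_chains hu hv⟩
      (h.trans_lt (show r < 2 * r by linarith))
  have h0n : GpEventuallyGE w (c 0) (c n) (T - Real.log 6 / ε - 2 * κ) := by
    refine gpEventuallyGE_of_eventually hX (hc 0 (by omega)) (hc n le_rfl)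
      ((hX.eventually_exp_neg_mul_gp_le (w := w) hε hL (by omega) hc hr).mono fun m hm => ?_)
    rw [← (exp_neg_mul_le_exp_neg_mul_iff hε), exp_neg_mul_sub_log_div hε.ne' (by norm_num)]
    linarith
  have h₁ := (hc0.gpEventuallyGE hX w (T - Real.log 6 / ε - 2 * κ)).symm.trans hX h0n
  rw [min_self] at h₁
  have h₂ := h₁.trans hX (hcn.gpEventuallyGE hX w (T - Real.log 6 / ε - 2 * κ - κ))
  rw [min_self] at h₂
  exact h₂.mono (by linarith)

end VisualMetric

lemma BoundaryUniformlyPerfect.exists_gp_window [MetricSpace X] {δ κ ε : ℝ}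
    (hperf : BoundaryUniformlyPerfect X δ) (hX : FourPointCondition X κ) (w : X)
    (hε : 0 < ε) (hε1 : ε < 1) (hε5 : ε * (5 * δ) < 1) (hL : Real.exp (ε * κ) ^ 2 ≤ 2) :
    ∃ M T₀ : ℝ, 0 ≤ M ∧ ∀ u : ℕ → X, IsGromovSeq u → ∀ T, T₀ ≤ T →
      ∃ v : ℕ → X, IsGromovSeq v ∧ GpEventuallyGE w u v (T - M) ∧
        GpEventuallyLE w u v (T + M) := by
  obtain ⟨S, hS1, r₀, hr₀, hmain⟩ := hperf w ε hε hε1 hε5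
  have hS : 0 < S := by linarith
  have hκ := hX.nonneg w
  have hlog : Real.log 6 ≤ Real.log (6 * S) :=
    Real.log_le_log (by norm_num) (by linarith)
  have hlog' : Real.log 2 + Real.log S ≤ Real.log (6 * S) := by
    rw [← Real.log_mul two_ne_zero hS.ne']
    exact Real.log_le_log (by positivity) (by linarith)
  refine ⟨Real.log (6 * S) / ε + 4 * κ, -Real.log r₀ / ε,
    by have := Real.log_nonneg (show 1 ≤ 6 * S by linarith); positivity,
    fun u hu T hT => ?_⟩
  have hr : Real.exp (-ε * T) ≤ r₀ := by
    rw [← Real.exp_log hr₀, show Real.log r₀ = -ε * (-Real.log r₀ / ε) by field_simp]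
    exact (exp_neg_mul_le_exp_neg_mul_iff hε).2 hT
  obtain ⟨v, hv, hlow, hup⟩ := hmain u hu _ (Real.exp_pos _) hr
  refine ⟨v, hv, (hX.gpEventuallyGE_of_visDist_le hε hL hu hv hup).mono ?_, ?_⟩
  · have := div_le_div_of_nonneg_right hlog hε.le
    linarith
  · have hρ : Real.exp (-ε * (T + Real.log S / ε)) ≤ visRho w ε u v := by
      have := exp_neg_mul_sub_log_div hε.ne' hS (T + Real.log S / ε)
      rw [show T + Real.log S / ε - Real.log S / ε = T by ring] at this
      rw [this, mul_div_cancel_left₀ _ hS.ne'] at hlow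
      exact (hlow.trans_le (visDist_le_visRho hε.le hu hv)).le
    refine (hX.gpEventuallyLE_of_exp_le_visRho hε hu hv hρ).mono ?_
    have := div_le_div_of_nonneg_right hlog' hε.le
    rw [add_div] at this
    linarith

section Pole
variable [MetricSpace X] {κ : ℝ}

lemma FourPointCondition.eventually_gp_le_or (hX : FourPointCondition X κ) {a b : ℕ → X}
    {p w : X} {L : ℝ} (hab : ∀ᶠ m in atTop, ∀ᶠ n in atTop, gp p (a m) (b n) ≤ L) :
    (∀ᶠ m in atTop, gp p w (a m) ≤ L + κ) ∨ (∀ᶠ n in atTop, gp p w (b n) ≤ L + κ) := by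
  by_contra! h
  obtain ⟨m, hm, hmb⟩ := (h.1.and_eventually hab).exists
  obtain ⟨n, hn, hmn⟩ := (h.2.and_eventually hmb).exists
  have := hX p (a m) w (b n)
  have := lt_min (gp_comm p w (a m) ▸ hm) hn
  linarith

variable (hX : FourPointCondition X κ)
include hX

lemma PoleAt.exists_gp_ge_of_inl {L : ℝ} {o : X} (hpole : PoleAt L (Sum.inl o)) (p : X) :
    ∃ v : ℕ → X, IsGromovSeq v ∧ ∀ᶠ n in atTop, dist o p - (2 * L + κ) ≤ gp o p (v n) := by
  obtain ⟨γ, I, v, hv, ⟨-, -, hiso, ⟨s₀, hs₀, rfl, hmin⟩, ⟨σ, hσI, hσ, hequiv⟩⟩, s, hs, hd⟩ :=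
    hpole.2 p
  have h : ∀ᶠ n in atTop, dist (γ s₀) p - 2 * L ≤ gp (γ s₀) p (γ (σ n)) := by
    filter_upwards [hσ.eventually_ge_atTop s] with n hn
    have hbetween := dist_eq_add_of_isometric hiso hs₀ hs (hσI n) (hmin s hs) hn
    have := gp_eq_dist_of_dist_eq_add hbetween
    have := gp_le_gp_add_dist (γ s₀) (γ s) p (γ (σ n))
    have := dist_triangle (γ s₀) (γ s) p
    rw [dist_comm] at hd
    linarith
  exact ⟨v, hv, (hequiv.eventually_gp_ge hX h).mono fun n hn => by linarith⟩

lemma PoleAt.exists_gp_ge_of_inr {L : ℝ} {u : ℕ → X} (hpole : PoleAt L (Sum.inr u)) (p : X) :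
    ∃ v : ℕ → X, IsGromovSeq v ∧
      ∀ᶠ n in atTop, dist (u 0) p - (L + 2 * κ) ≤ gp (u 0) p (v n) := by
  obtain ⟨γ, I, v, hv, ⟨-, -, hiso, ⟨σ₁, hσ₁I, hσ₁, hequiv₁⟩, ⟨σ₂, hσ₂I, hσ₂, hequiv₂⟩⟩,
    s, hs, hd⟩ := hpole.2 p
  have hab : ∀ᶠ m in atTop, ∀ᶠ n in atTop, gp p (γ (σ₁ m)) (γ (σ₂ n)) ≤ L := by
    filter_upwards [hσ₁.eventually_le_atBot s] with m hm
    filter_upwards [hσ₂.eventually_ge_atTop s] with n hn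
    exact (gp_le_dist_of_dist_eq_add
      (dist_eq_add_of_isometric hiso (hσ₁I m) hs (hσ₂I n) hm hn) p).trans hd
  -- seen from `p`, one end of `γ` is close to `w = u 0`; the other one then leads away from `w`
  have key : ∀ {a b : ℕ → X}, GromovEquiv a b →
      (∀ᶠ m in atTop, gp p (u 0) (a m) ≤ L + κ) →
      ∀ᶠ n in atTop, dist (u 0) p - (L + 2 * κ) ≤ gp (u 0) p (b n) := by
    intro a b hequiv h
    refine (hequiv.eventually_gp_ge hX (c := dist (u 0) p - (L + κ)) (h.mono fun m hm => ?_)).mono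
      fun n hn => by linarith
    linarith [gp_add_gp_swap (u 0) p (a m)]
  rcases hX.eventually_gp_le_or hab with h | h
  · exact ⟨u, hequiv₁.2.1, key hequiv₁ h⟩
  · exact ⟨v, hv, key hequiv₂ h⟩

lemma HasPole.exists_gp_ge (hpole : HasPole X) :
    ∃ (w : X) (C : ℝ), 0 ≤ C ∧ ∀ p : X, ∃ v : ℕ → X, IsGromovSeq v ∧
      ∀ᶠ n in atTop, dist w p - C ≤ gp w p (v n) := by
  obtain ⟨L, o, hL, hpole⟩ := hpole
  rcases o with o | u
  · have hκ := hX.nonneg o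
    refine ⟨o, 2 * L + 2 * κ, by positivity, fun p => ?_⟩
    obtain ⟨v, hv, h⟩ := hpole.exists_gp_ge_of_inl hX p
    exact ⟨v, hv, h.mono fun n hn => by linarith⟩
  · have hκ := hX.nonneg (u 0)
    refine ⟨u 0, 2 * L + 2 * κ, by positivity, fun p => ?_⟩
    obtain ⟨v, hv, h⟩ := hpole.exists_gp_ge_of_inr hX p
    exact ⟨v, hv, h.mono fun n hn => by linarith⟩

end Pole

section Lines
variable [MetricSpace X] {κ δ : ℝ}

/-- One of `(x|y)_p`, `(y|z)_p` is at least `|p - y| / 2 ≥ (q|y)_p / 2`. -/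
lemma FourPointCondition.gp_le_of_dist_eq_add (hX : FourPointCondition X κ) {x y z : X}
    (h : dist x z = dist x y + dist y z) (p q : X) :
    gp p q y ≤ 2 * max (gp p q x) (gp p q z) + 2 * κ := by
  have hsum := gp_add_gp_of_dist_eq_add h p
  have := gp_nonneg p x z
  have := gp_le_dist_right p q y
  rw [dist_comm] at hsum
  rcases le_total (gp p x y) (gp p y z) with hle | hle
  · have := hX p q y z
    have := le_min (show gp p q y / 2 ≤ gp p q y by linarith [gp_nonneg p q y])
      (show gp p q y / 2 ≤ gp p y z by linarith)
    linarith [le_max_right (gp p q x) (gp p q z)]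
  · have := hX p q y x
    have := le_min (show gp p q y / 2 ≤ gp p q y by linarith [gp_nonneg p q y])
      (show gp p q y / 2 ≤ gp p y x by rw [gp_comm p y x]; linarith)
    linarith [le_max_left (gp p q x) (gp p q z)]

/-- A geodesic from `x` to `y`, extended by constants to a `1`-Lipschitz map on `ℝ` and
reparametrized so that time `0` is within `(x|y)_p + 2δ` of `p`. -/
lemma DeltaHyp.exists_segment (hgeo : GeodesicSpace X) (hhyp : DeltaHyp X δ) (p x y : X) :
    ∃ f : ℝ → X, dist p (f 0) ≤ gp p x y + 2 * δ ∧ (∀ s t, dist (f s) (f t) ≤ |s - t|) ∧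
      (∀ s ∈ Icc (gp p x y + 2 * δ - dist p x) (dist p y - (gp p x y + 2 * δ)),
        ∀ t ∈ Icc (gp p x y + 2 * δ - dist p x) (dist p y - (gp p x y + 2 * δ)),
          dist (f s) (f t) = |s - t|) ∧
      ∀ t, dist x y = dist x (f t) + dist (f t) y := by
  obtain ⟨σ, hσ, h0, h1⟩ := hgeo x y
  obtain ⟨t₀, ht₀, hnear⟩ := hhyp.exists_dist_le_gp_add hgeo hσ h0 h1 p
  set π := Set.projIcc 0 (dist x y) dist_nonneg
  have hdist : ∀ a b : ℝ, dist (σ (π a)) (σ (π b)) = |(π a : ℝ) - π b| :=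
    fun a b => hσ _ (π a).2 _ (π b).2
  have hproj : ∀ s ∈ Icc (gp p x y + 2 * δ - dist p x) (dist p y - (gp p x y + 2 * δ)),
      (π (s + t₀) : ℝ) = s + t₀ := by
    intro s hs
    obtain ⟨hx, hy⟩ := hσ.dist_eq h0 h1 ht₀
    have := dist_triangle p (σ t₀) x
    have := dist_triangle p (σ t₀) y
    have hmem : s + t₀ ∈ Icc 0 (dist x y) := by
      constructor <;> linarith [hs.1, hs.2, dist_comm x (σ t₀), dist_comm y (σ t₀)]
    simp [π, Set.projIcc_of_mem _ hmem]
  refine ⟨fun t => σ (π (t + t₀)), ?_, fun s t => ?_, fun s hs t ht => ?_, fun t => ?_⟩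
  · simpa [π, Set.projIcc_of_mem _ ht₀] using hnear
  · rw [hdist, show s - t = (s + t₀) - (t + t₀) by ring]
    exact Set.abs_projIcc_sub_projIcc _
  · rw [hdist, hproj s hs, hproj t ht]
    ring_nf
  · obtain ⟨hx, hy⟩ := hσ.dist_eq h0 h1 (π (t + t₀)).2
    show dist x y = dist x (σ (π (t + t₀))) + dist (σ (π (t + t₀))) y
    linarith [dist_comm (σ (π (t + t₀))) y]

/-- The maps lie in a product of closed balls, compact by Tychonoff, so they cluster; being
isometric is a closed condition. -/
lemma exists_isBiInfGeod_mapClusterPt [ProperSpace X] {f : ℕ → ℝ → X} {p : X} {R : ℝ}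
    (hR : ∀ n, dist p (f n 0) ≤ R) (hlip : ∀ n s t, dist (f n s) (f n t) ≤ |s - t|)
    (hiso : ∀ s t, ∀ᶠ n in atTop, dist (f n s) (f n t) = |s - t|) :
    ∃ γ : ℝ → X, IsBiInfGeod γ ∧ dist p (γ 0) ≤ R ∧ MapClusterPt γ atTop f := by
  have hK : IsCompact (Set.pi univ fun t : ℝ => closedBall p (|t| + R)) :=
    isCompact_univ_pi fun t => isCompact_closedBall _ _
  have hf : ∀ n, f n ∈ Set.pi univ fun t : ℝ => closedBall p (|t| + R) := by
    intro n t _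
    have := hlip n t 0
    rw [sub_zero] at this
    rw [mem_closedBall, dist_comm]
    linarith [dist_triangle p (f n 0) (f n t), dist_comm (f n 0) (f n t), hR n]
  obtain ⟨γ, -, hγ⟩ := hK.exists_mapClusterPt (f := atTop) (tendsto_principal.2 (.of_forall hf))
  refine ⟨γ, fun s t => ?_, ?_, hγ⟩
  · exact (isClosed_eq (by fun_prop) continuous_const).mem_of_mapClusterPt (s := {g : ℝ → X |
      dist (g s) (g t) = |s - t|}) hγ (hiso s t)
  · exact (isClosed_le (by fun_prop) continuous_const).mem_of_mapClusterPt
      (s := {g : ℝ → X | dist p (g 0) ≤ R}) hγ (.of_forall hR)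

/-- `γ` is a cluster point of geodesics from `x k` to `y k` passing near `p`, and inherits the
control of Gromov products from their endpoints. -/
lemma DeltaHyp.exists_isBiInfGeod [ProperSpace X] (hgeo : GeodesicSpace X)
    (hhyp : DeltaHyp X δ) {x y : ℕ → X} {p : X} {A : ℝ} (hx : IsGromovSeq x)
    (hy : IsGromovSeq y) (hxy : GpEventuallyLE p x y A) :
    ∃ γ : ℝ → X, IsBiInfGeod γ ∧ dist p (γ 0) ≤ A + 2 * δ ∧
      ∀ (q : X) (B : ℝ), (∀ᶠ k in atTop, gp p q (x k) ≤ B) →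
        (∀ᶠ k in atTop, gp p q (y k) ≤ B) → ∀ t, gp p q (γ t) ≤ 2 * B + 6 * δ := by
  obtain ⟨N, hN⟩ := hxy
  have hshift := tendsto_add_atTop_nat N
  choose f hf0 hflip hfiso hfbtw using fun k => hhyp.exists_segment hgeo p (x (k + N)) (y (k + N))
  have hA : ∀ k, gp p (x (k + N)) (y (k + N)) + 2 * δ ≤ A + 2 * δ := fun k => by
    linarith [hN _ _ (Nat.le_add_left N k) (Nat.le_add_left N k)]
  have hiso : ∀ s t, ∀ᶠ k in atTop, dist (f k s) (f k t) = |s - t| := by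
    intro s t
    filter_upwards [((hx.tendsto_dist p).comp hshift).eventually_ge_atTop (A + 2 * δ + |s| + |t|),
      ((hy.tendsto_dist p).comp hshift).eventually_ge_atTop (A + 2 * δ + |s| + |t|)]
      with k hkx hky
    have := hA k
    simp only [Function.comp_apply] at hkx hky
    refine hfiso k s ⟨?_, ?_⟩ t ⟨?_, ?_⟩ <;>
      linarith [neg_abs_le s, le_abs_self s, neg_abs_le t, le_abs_self t]
  obtain ⟨γ, hγ, hγ0, hcl⟩ := exists_isBiInfGeod_mapClusterPt (fun k => (hf0 k).trans (hA k))
    hflip hiso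
  refine ⟨γ, hγ, hγ0, fun q B hqx hqy t => ?_⟩
  have hev : ∀ᶠ k in atTop, gp p q (f k t) ≤ 2 * B + 6 * δ := by
    filter_upwards [hshift.eventually hqx, hshift.eventually hqy] with k hkx hky
    have := (hhyp.fourPointCondition hgeo).gp_le_of_dist_eq_add (hfbtw k t) p q
    have := max_le hkx hky
    linarith
  exact (isClosed_le ((continuous_gp p q).comp (continuous_apply t))
    continuous_const).mem_of_mapClusterPt (s := {g : ℝ → X | gp p q (g t) ≤ 2 * B + 6 * δ}) hcl hev

end Lines

section Directions
variable [MetricSpace X] {κ : ℝ}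

/-- The four directions branch off, at increasing depths beyond `|w - p|`, from a direction
that passes near `p` as seen from `w`. -/
lemma FourPointCondition.exists_four_directions (hX : FourPointCondition X κ) {w : X}
    {C M T₀ : ℝ} (hC : 0 ≤ C) (hM : 0 ≤ M)
    (hdir : ∀ p : X, ∃ v : ℕ → X, IsGromovSeq v ∧ ∀ᶠ n in atTop, dist w p - C ≤ gp w p (v n))
    (hwin : ∀ u : ℕ → X, IsGromovSeq u → ∀ T, T₀ ≤ T → ∃ v : ℕ → X, IsGromovSeq v ∧
      GpEventuallyGE w u v (T - M) ∧ GpEventuallyLE w u v (T + M)) :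
    ∃ A : ℝ, ∀ p : X, ∃ V : Fin 4 → ℕ → X, (∀ i, IsGromovSeq (V i)) ∧
      ∀ i j, i ≠ j → GpEventuallyLE p (V i) (V j) A := by
  have hκ := hX.nonneg w
  set E := 2 * M + κ + 1
  refine ⟨|T₀| + 4 * E + M + 3 * κ + 2 * C, fun p => ?_⟩
  obtain ⟨v, hv, hvp⟩ := hdir p
  set T := dist w p + |T₀|
  set D : Fin 4 → ℝ := fun i => T + ((i : ℕ) + 1) * E
  have hD : ∀ i, T + E ≤ D i ∧ D i ≤ T + 4 * E := fun i => by
    have : ((i : ℕ) : ℝ) ≤ 3 := by exact_mod_cast Nat.le_of_lt_succ i.2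
    constructor <;> nlinarith [Nat.cast_nonneg (α := ℝ) (i : ℕ)]
  choose V hV hVge hVle using fun i => hwin v hv (D i) (by
    linarith [(hD i).1, le_abs_self T₀, dist_nonneg (x := w) (y := p)])
  have hp : ∀ i, ∀ᶠ n in atTop, dist w p - (C + κ) ≤ gp w p (V i n) := fun i => by
    filter_upwards [(hVge i).eventually_gp_ge hX hvp] with n hn
    rw [min_eq_left (by linarith [(hD i).1, abs_nonneg T₀])] at hn
    linarith
  have hpair : ∀ i j, i < j → GpEventuallyLE p (V i) (V j) (|T₀| + 4 * E + M + 3 * κ + 2 * C) := by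
    intro i j hij
    have hDij : D i + E ≤ D j := by
      have : ((i : ℕ) : ℝ) + 1 ≤ (j : ℕ) := by exact_mod_cast hij
      simp only [D]
      nlinarith
    refine (((hVle i).symm.trans_ge hX (hVge j).symm (by linarith)).of_base_change
      (hp i) (hp j)).mono ?_
    linarith [(hD i).2]
  refine ⟨V, hV, fun i j hij => ?_⟩
  rcases lt_or_gt_of_ne hij with h | h
  · exact hpair i j h
  · exact (hpair j i h).symm

end Directions

lemma exists_ne_and_of_forall_or {α : Type*} [Fintype α] (hα : 4 ≤ Fintype.card α)
    {P Q : α → Prop} (hP : ∀ i j, i ≠ j → P i ∨ P j) (hQ : ∀ i j, i ≠ j → Q i ∨ Q j) :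
    ∃ i j, i ≠ j ∧ P i ∧ Q i ∧ P j ∧ Q j := by
  classical
  have hle : ∀ {R : α → Prop}, (∀ i j, i ≠ j → R i ∨ R j) →
      (Finset.univ.filter fun i => ¬R i).card ≤ 1 := fun hR =>
    Finset.card_le_one.2 fun i hi j hj => by
      by_contra hij
      simp only [Finset.mem_filter] at hi hj
      exact (hR i j hij).elim hi.2 hj.2
  have hbad : (Finset.univ.filter fun i => ¬(P i ∧ Q i)).card ≤ 2 := by
    refine (Finset.card_le_card fun i hi => ?_).trans
      ((Finset.card_union_le _ _).trans (add_le_add (hle hP) (hle hQ)))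
    simp only [Finset.mem_filter, Finset.mem_union, not_and_or] at hi ⊢
    tauto
  have hgood := Finset.card_filter_add_card_filter_not (s := Finset.univ) fun i => P i ∧ Q i
  rw [Finset.card_univ] at hgood
  obtain ⟨i, hi, j, hj, hij⟩ :=
    Finset.one_lt_card.1 (show 1 < (Finset.univ.filter fun i => P i ∧ Q i).card by omega)
  simp only [Finset.mem_filter] at hi hj
  exact ⟨i, j, hij, hi.2.1, hi.2.2, hj.2.1, hj.2.2⟩

section AvoidingLines
variable [MetricSpace X] {κ δ : ℝ}

def NearOrDeep (p : X) (B : ℝ) (z : ℕ → X) : Prop :=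
  (∀ᶠ m in atTop, dist (z m) p ≤ B) ∨ GpEventuallyGE p z z B

lemma NearOrDeep.gpEventuallyLE_or (hX : FourPointCondition X κ) {p : X} {A B : ℝ}
    {z a b : ℕ → X} (hz : NearOrDeep p B z) (hab : GpEventuallyLE p a b A) (hB : A + 2 * κ < B) :
    GpEventuallyLE p z a B ∨ GpEventuallyLE p z b B := by
  rcases hz with hnear | ⟨N₀, hdeep⟩
  · obtain ⟨N, hN⟩ := eventually_atTop.1 hnear
    exact .inl ⟨N, fun m k hm _ => (gp_le_dist_left p (z m) (a k)).trans (hN m hm)⟩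
  by_contra! h
  obtain ⟨N₁, hN₁⟩ := hab
  simp only [GpEventuallyLE, not_exists, not_forall, not_le] at h
  obtain ⟨m, k, hm, hk, hmk⟩ := h.1 (max N₀ N₁)
  obtain ⟨m', k', hm', hk', hmk'⟩ := h.2 (max N₀ N₁)
  have hzz := hdeep m m' (le_of_max_le_left hm) (le_of_max_le_left hm')
  have hzb : B - κ ≤ gp p (z m) (b k') := by
    have := hX p (z m) (z m') (b k')
    have := min_le_min hzz hmk'.le
    rw [min_self] at this
    linarith
  have := hX p (a k) (z m) (b k')
  have := min_le_min (gp_comm p (z m) (a k) ▸ hmk.le) hzb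
  rw [min_eq_right (by linarith [hX.nonneg p])] at this
  linarith [hN₁ k k' (le_of_max_le_right hk) (le_of_max_le_right hk')]

def HasAvoidingLines (X : Type*) [MetricSpace X] (R B B' : ℝ) : Prop :=
  ∀ (p : X) (z₁ z₂ : ℕ → X), NearOrDeep p B z₁ → NearOrDeep p B z₂ →
    ∃ γ : ℝ → X, IsBiInfGeod γ ∧ dist p (γ 0) ≤ R ∧
      ∀ᶠ m in atTop, ∀ t, gp p (z₁ m) (γ t) ≤ B' ∧ gp p (z₂ m) (γ t) ≤ B'

/-- Each of `z₁`, `z₂` fails to be controlled by at most one of the four directions, so two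
directions control both, and the line between them avoids `z₁` and `z₂`. -/
lemma DeltaHyp.hasAvoidingLines [ProperSpace X] (hgeo : GeodesicSpace X) (hhyp : DeltaHyp X δ)
    {A : ℝ} (hdir : ∀ p : X, ∃ V : Fin 4 → ℕ → X, (∀ i, IsGromovSeq (V i)) ∧
      ∀ i j, i ≠ j → GpEventuallyLE p (V i) (V j) A) :
    HasAvoidingLines X (A + 2 * δ) (A + 6 * δ + 1) (2 * (A + 6 * δ + 1) + 6 * δ) := by
  intro p z₁ z₂ hz₁ hz₂
  obtain ⟨V, hV, hVA⟩ := hdir p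
  have hsplit : ∀ z, NearOrDeep p (A + 6 * δ + 1) z → ∀ i j, i ≠ j →
      GpEventuallyLE p z (V i) (A + 6 * δ + 1) ∨ GpEventuallyLE p z (V j) (A + 6 * δ + 1) :=
    fun z hz i j hij => hz.gpEventuallyLE_or (hhyp.fourPointCondition hgeo) (hVA i j hij)
      (by linarith)
  obtain ⟨i, j, hij, h₁i, h₂i, h₁j, h₂j⟩ :=
    exists_ne_and_of_forall_or (by simp) (hsplit z₁ hz₁) (hsplit z₂ hz₂)
  obtain ⟨γ, hγ, hγ0, hbound⟩ := hhyp.exists_isBiInfGeod hgeo (hV i) (hV j) (hVA i j hij)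
  have key : ∀ z, GpEventuallyLE p z (V i) (A + 6 * δ + 1) →
      GpEventuallyLE p z (V j) (A + 6 * δ + 1) →
      ∀ᶠ m in atTop, ∀ t, gp p (z m) (γ t) ≤ 2 * (A + 6 * δ + 1) + 6 * δ := by
    rintro z ⟨N₁, h₁⟩ ⟨N₂, h₂⟩
    refine eventually_atTop.2 ⟨max N₁ N₂, fun m hm => hbound _ _ ?_ ?_⟩
    · exact eventually_atTop.2 ⟨N₁, fun k hk => h₁ m k (le_of_max_le_left hm) hk⟩
    · exact eventually_atTop.2 ⟨N₂, fun k hk => h₂ m k (le_of_max_le_right hm) hk⟩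
  refine ⟨γ, hγ, hγ0, ?_⟩
  filter_upwards [key z₁ h₁i h₁j, key z₂ h₂i h₂j] with m h₁ h₂ t using ⟨h₁ t, h₂ t⟩

end AvoidingLines

lemma DeltaHyp.exists_hasAvoidingLines [MetricSpace X] [ProperSpace X] {δ : ℝ} (hδ : 0 ≤ δ)
    (hgeo : GeodesicSpace X) (hhyp : DeltaHyp X δ) (hpole : HasPole X)
    (hperf : BoundaryUniformlyPerfect X δ) : ∃ R B B' : ℝ, HasAvoidingLines X R B B' := by
  have hX := hhyp.fourPointCondition hgeo
  -- a visual parameter admissible for `δ` and small enough for the chain inequality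
  set ε := 1 / (10 * (δ + 1))
  have hε : 0 < ε := by positivity
  have hεδ : ε * δ ≤ 1 / 10 := by
    rw [div_mul_eq_mul_div, one_mul, div_le_iff₀ (by positivity)]
    linarith
  have hε1 : ε < 1 := by rw [div_lt_one (by positivity)]; linarith
  have hL : Real.exp (ε * (3 * δ)) ^ 2 ≤ 2 := by
    rw [← Real.exp_nat_mul, ← Real.exp_log two_pos, Real.exp_le_exp]
    have := Real.log_two_gt_d9
    push_cast
    linarith
  obtain ⟨w, C, hC, hdir⟩ := hpole.exists_gp_ge hX
  obtain ⟨M, T₀, hM, hwin⟩ := hperf.exists_gp_window hX w hε hε1 (by linarith) hL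
  obtain ⟨A, hA⟩ := hX.exists_four_directions hC hM hdir hwin
  exact ⟨_, _, _, hhyp.hasAvoidingLines hgeo hA⟩

section RichConditions
variable [MetricSpace X] {R B B' : ℝ}

lemma HasAvoidingLines.richCondOne (h : HasAvoidingLines X R B B') :
    RichCondOne X 0 (R + 1) (max (2 * B') R + 1) := by
  intro p q _
  have hz : NearOrDeep p B fun _ => q := by
    rcases le_total (dist q p) B with hqp | hqp
    · exact .inl (.of_forall fun _ => hqp)
    · exact .inr ⟨0, fun _ _ _ _ => (gp_self p q).symm ▸ hqp⟩
  obtain ⟨γ, hγ, hγ0, hev⟩ := h p _ _ hz hz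
  obtain ⟨m, hm⟩ := hev.exists
  have hup : infDist q (range γ) ≤ dist p q + R := by
    refine (infDist_le_dist_of_mem (mem_range_self 0)).trans ?_
    linarith [dist_triangle q p (γ 0), dist_comm q p]
  have hlow : dist p q - 2 * B' ≤ infDist q (range γ) := by
    refine (le_infDist (range_nonempty γ)).2 ?_
    rintro _ ⟨t, rfl⟩
    linarith [dist_eq_dist_add_dist_sub_gp p q (γ t), dist_nonneg (x := p) (y := γ t),
      (hm t).1, dist_comm q p]
  refine ⟨γ, hγ, (infDist_le_dist_of_mem (mem_range_self 0)).trans_lt (by linarith), ?_⟩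
  rw [abs_lt]
  constructor <;> linarith [le_max_left (2 * B') R, le_max_right (2 * B') R]

lemma IsBiInfGeod.comp_neg {γ : ℝ → X} (hγ : IsBiInfGeod γ) : IsBiInfGeod fun t => γ (-t) :=
  fun s t => by rw [hγ, ← abs_neg]; ring_nf

lemma IsBiInfGeod.nearOrDeep {γ : ℝ → X} (hγ : IsBiInfGeod γ) (p : X) (B : ℝ) :
    NearOrDeep p B fun m : ℕ => γ m := by
  have hgp : ∀ s t : ℝ, 0 ≤ s → s ≤ t → gp (γ 0) (γ s) (γ t) = s := fun s t hs hst => by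
    rw [gp_eq_dist_of_dist_eq_add (dist_eq_add_of_isometric (fun s _ t _ => hγ s t)
      (mem_univ 0) (mem_univ s) (mem_univ t) hs hst), hγ, zero_sub, abs_neg, abs_of_nonneg hs]
  obtain ⟨N, hN⟩ := exists_nat_ge (B + dist p (γ 0))
  refine .inr ⟨N, fun m m' hm hm' => ?_⟩
  have := gp_le_gp_add_dist_base (γ 0) p (γ m) (γ m')
  rw [dist_comm] at this
  have hm : (N : ℝ) ≤ m := by exact_mod_cast hm
  have hm' : (N : ℝ) ≤ m' := by exact_mod_cast hm'
  rcases le_total (m : ℝ) m' with hle | hle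
  · rw [hgp _ _ (Nat.cast_nonneg m) hle] at this; linarith
  · rw [gp_comm, hgp _ _ (Nat.cast_nonneg m') hle] at this; linarith

/-- Bounded products at `p` with both ends of `γ` give bounded products with all of `γ`. -/
lemma FourPointCondition.infDist_sub_le_dist {κ : ℝ} (hX : FourPointCondition X κ)
    {γ : ℝ → X} (hγ : IsBiInfGeod γ) {p y : X}
    (h : ∀ᶠ m : ℕ in atTop, gp p (γ m) y ≤ B' ∧ gp p (γ (-m)) y ≤ B') (t : ℝ) :
    infDist p (range γ) - 2 * (2 * B' + 2 * κ) ≤ dist y (γ t) := by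
  obtain ⟨m, ⟨h₁, h₂⟩, hm⟩ := (h.and (eventually_ge_atTop ⌈|t|⌉₊)).exists
  have ht := abs_le.1 ((Nat.le_ceil |t|).trans (Nat.cast_le.2 hm))
  have hbetween := dist_eq_add_of_isometric (fun s _ t _ => hγ s t) (mem_univ (-(m : ℝ)))
    (mem_univ t) (mem_univ (m : ℝ)) ht.1 ht.2
  have := hX.gp_le_of_dist_eq_add hbetween p y
  have := max_le (gp_comm p y _ ▸ h₂) (gp_comm p y _ ▸ h₁)
  linarith [dist_eq_dist_add_dist_sub_gp p y (γ t), dist_nonneg (x := y) (y := p),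
    infDist_le_dist_of_mem (x := p) (mem_range_self (f := γ) t)]

lemma HasAvoidingLines.richCondTwo {κ : ℝ} (hX : FourPointCondition X κ)
    (h : HasAvoidingLines X R B B') :
    RichCondTwo X (R + 1) (max (2 * (2 * B' + 2 * κ)) (R + 1) + 1) := by
  intro γ hγ p
  obtain ⟨γ', hγ', hγ'0, hev⟩ := h p _ _ (hγ.nearOrDeep p B) (hγ.comp_neg.nearOrDeep p B)
  set D := infDist p (range γ)
  have hline : D - 2 * (2 * B' + 2 * κ) ≤ lineDist γ' γ :=
    le_csInf ⟨_, 0, 0, rfl⟩ fun _ ⟨s, t, hr⟩ =>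
      hr ▸ hX.infDist_sub_le_dist hγ (hev.mono fun m hm => hm s) t
  obtain ⟨_, ⟨t₀, rfl⟩, ht₀⟩ := (infDist_lt_iff (range_nonempty γ)).1 (lt_add_one D)
  have hup : lineDist γ' γ ≤ R + D + 1 := by
    have hbdd : BddBelow {r | ∃ s t : ℝ, r = dist (γ' s) (γ t)} :=
      ⟨0, fun _ ⟨_, _, hr⟩ => hr ▸ dist_nonneg⟩
    refine (csInf_le hbdd ⟨0, t₀, rfl⟩).trans ?_
    linarith [dist_triangle (γ' 0) p (γ t₀), dist_comm p (γ' 0)]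
  refine ⟨γ', hγ', (infDist_le_dist_of_mem (mem_range_self 0)).trans_lt (by linarith), ?_⟩
  rw [abs_lt]
  constructor <;> linarith [le_max_left (2 * (2 * B' + 2 * κ)) (R + 1),
    le_max_right (2 * (2 * B' + 2 * κ)) (R + 1)]

end RichConditions

/-- **Proposition 4.4.** A proper geodesic δ-hyperbolic space with a pole whose Gromov
boundary is uniformly perfect is geodesically rich. -/
theorem geodesicallyRich_of_boundaryUniformlyPerfect
    (X : Type*) [MetricSpace X] [ProperSpace X] (δ : ℝ) (hδ : 0 ≤ δ)
    (hgeo : GeodesicSpace X) (hhyp : DeltaHyp X δ) (hpole : HasPole X)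
    (hperf : BoundaryUniformlyPerfect X δ) :
    GeodesicallyRich X := by
  obtain ⟨R, B, B', h⟩ := hhyp.exists_hasAvoidingLines hδ hgeo hpole hperf
  exact ⟨_, _, _, _, _, h.richCondOne, h.richCondTwo (hhyp.fourPointCondition hgeo)⟩

end BoundaryRigidity
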